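/- arXiv:1612.07563 — 3 statements merged into one kernel-verified Lean document; each statement's English description precedes it below -/
import Mathlib

section
/- Let α > 0 be a non-integer real number, let m = ⌈α⌉, let n ∈ ℕ, and let a < x be real numbers. Then the left-sided Riemann–Liouville fractional derivative of order α of the power function τ ↦ τ^n satisfies: the m-th iterated derivative at x of y ↦ (1/Γ(m-α)) ∫_a^y (y - τ)^(m-α-1) τ^n dτ equals n! · (x - a)^(-α) · Σ_{k=0}^{n} a^(n-k) (x - a)^k / ((n - k)! · Γ(k - α + 1)). -/
/-!
Expanding `τ ^ n = ∑ₖ C(n, k) a ^ (n - k) (τ - a) ^ k` around the base point reduces everything to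
shifted powers. By the Beta integral, the Riemann–Liouville integral of order `β` maps
`(τ - a) ^ k / k!` to `(y - a) ^ (β + k) / Γ(β + k + 1)`, and differentiating
`(y - a) ^ p / Γ(p + 1)` lowers `p` by one, so `m` derivatives of the order `m - α` integral
give the terms `(x - a) ^ (k - α) / Γ(k - α + 1)`.
-/

open MeasureTheory Real

namespace Real

/-- Unlike `Gamma_add_one`, this holds at `s = 0` too, because `Gamma 0 = 0`. -/
theorem inv_Gamma_eq_mul_inv_Gamma_add_one (s : ℝ) : (Gamma s)⁻¹ = s * (Gamma (s + 1))⁻¹ := by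
  rcases ne_or_eq s 0 with hs | rfl
  · rw [Gamma_add_one hs, mul_inv, mul_inv_cancel_left₀ hs]
  · rw [Gamma_zero, inv_zero, zero_mul]

theorem integral_rpow_mul_rpow_sub {u v s : ℝ} (hu : 0 < u) (hv : 0 < v) (hs : 0 < s) :
    ∫ t in (0 : ℝ)..s, t ^ (u - 1) * (s - t) ^ (v - 1) =
      s ^ (u + v - 1) * (Gamma u * Gamma v / Gamma (u + v)) := by
  have key := Complex.betaIntegral_scaled u v hs
  rw [Complex.betaIntegral_eq_Gamma_mul_div _ _ (by simpa) (by simpa)] at key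
  apply Complex.ofReal_injective
  convert key using 1
  · rw [← intervalIntegral.integral_ofReal]
    refine intervalIntegral.integral_congr fun t ht => ?_
    rw [Set.uIcc_of_le hs.le] at ht
    push_cast
    rw [Complex.ofReal_cpow ht.1, Complex.ofReal_cpow (sub_nonneg.2 ht.2)]
    push_cast; rfl
  · push_cast
    rw [Complex.ofReal_cpow hs.le, ← Complex.ofReal_add, Complex.Gamma_ofReal, Complex.Gamma_ofReal,
      Complex.Gamma_ofReal]
    push_cast; rfl

theorem integral_sub_rpow_mul_sub_rpow {u v a y : ℝ} (hu : 0 < u) (hv : 0 < v) (hay : a < y) :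
    ∫ τ in a..y, (τ - a) ^ (u - 1) * (y - τ) ^ (v - 1) =
      (y - a) ^ (u + v - 1) * (Gamma u * Gamma v / Gamma (u + v)) := by
  have h := intervalIntegral.integral_comp_sub_right
    (fun t => t ^ (u - 1) * ((y - a) - t) ^ (v - 1)) a (a := a) (b := y)
  simp only [sub_sub_sub_cancel_right, sub_self] at h
  rw [h, integral_rpow_mul_rpow_sub hu hv (sub_pos.2 hay)]

theorem hasDerivAt_rpow_sub_div_Gamma {a y : ℝ} (p : ℝ) (hay : a < y) :
    HasDerivAt (fun y => (y - a) ^ p / Gamma (p + 1)) ((y - a) ^ (p - 1) / Gamma p) y := by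
  have h := (((hasDerivAt_id' y).sub_const a).rpow_const (p := p)
    (Or.inl (sub_pos.2 hay).ne')).div_const (Gamma (p + 1))
  refine h.congr_deriv ?_
  rw [div_eq_mul_inv _ (Gamma p), inv_Gamma_eq_mul_inv_Gamma_add_one]
  ring

theorem iteratedDeriv_sum_rpow_sub_div_Gamma {ι : Type*} (s : Finset ι) (c : ι → ℝ) (a : ℝ)
    (j : ℕ) : ∀ (p : ι → ℝ) {y : ℝ}, a < y →
      iteratedDeriv j (fun y => ∑ i ∈ s, c i * ((y - a) ^ p i / Gamma (p i + 1))) y =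
        ∑ i ∈ s, c i * ((y - a) ^ (p i - j) / Gamma (p i - j + 1)) := by
  induction j with
  | zero => intro p y _; simp
  | succ j ih =>
    intro p y hay
    have hderiv : deriv (fun y => ∑ i ∈ s, c i * ((y - a) ^ p i / Gamma (p i + 1))) =ᶠ[nhds y]
        fun y => ∑ i ∈ s, c i * ((y - a) ^ (p i - 1) / Gamma (p i - 1 + 1)) := by
      filter_upwards [Ioi_mem_nhds hay] with z hz
      refine (HasDerivAt.fun_sum fun i _ => ?_).deriv
      simpa using (hasDerivAt_rpow_sub_div_Gamma (p i) hz).const_mul (c i)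
    rw [iteratedDeriv_succ', hderiv.iteratedDeriv_eq, ih _ hay]
    simp only [Nat.cast_succ, sub_sub, add_comm (1 : ℝ) (j : ℝ)]

end Real

/-- The Riemann–Liouville fractional integral `ₐI^β f` of order `β` with base point `a`. -/
noncomputable def rlIntegral (β a : ℝ) (f : ℝ → ℝ) (y : ℝ) : ℝ :=
  1 / Gamma β * ∫ τ in a..y, (y - τ) ^ (β - 1) * f τ

section rlIntegral

variable {β a y : ℝ}

theorem intervalIntegrable_sub_rpow_mul (hβ : 0 < β) {f : ℝ → ℝ} (hf : Continuous f) :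
    IntervalIntegrable (fun τ => (y - τ) ^ (β - 1) * f τ) volume a y := by
  have hpow : IntervalIntegrable (fun τ : ℝ => (y - τ) ^ (β - 1)) volume a y := by
    simpa using ((intervalIntegral.intervalIntegrable_rpow' (a := 0) (b := y - a)
      (by linarith : -1 < β - 1)).comp_sub_left y).symm
  exact hpow.mul_continuousOn hf.continuousOn

theorem rlIntegral_sum_const_mul {ι : Type*} (hβ : 0 < β) (s : Finset ι) (c : ι → ℝ)
    {f : ι → ℝ → ℝ} (hf : ∀ i ∈ s, Continuous (f i)) :
    rlIntegral β a (fun τ => ∑ i ∈ s, c i * f i τ) y = ∑ i ∈ s, c i * rlIntegral β a (f i) y := by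
  simp only [rlIntegral, Finset.mul_sum, mul_left_comm _ (c _)]
  rw [intervalIntegral.integral_finsetSum fun i hi =>
    (intervalIntegrable_sub_rpow_mul hβ (hf i hi)).const_mul (c i), Finset.mul_sum]
  simp only [intervalIntegral.integral_const_mul, mul_left_comm]

theorem rlIntegral_sub_pow (hβ : 0 < β) (hay : a < y) (k : ℕ) :
    rlIntegral β a (fun τ => (τ - a) ^ k) y =
      k.factorial * ((y - a) ^ (β + k) / Gamma (β + k + 1)) := by
  have hbeta := integral_sub_rpow_mul_sub_rpow (u := k + 1) (by positivity) hβ hay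
  rw [add_sub_cancel_right, Gamma_nat_eq_factorial, show (k + 1 + β - 1 : ℝ) = β + k by ring,
    show (k + 1 + β : ℝ) = β + k + 1 by ring] at hbeta
  simp only [rpow_natCast] at hbeta
  rw [rlIntegral]
  simp_rw [mul_comm ((y - _) ^ (β - 1))]
  rw [hbeta]
  field_simp [(Gamma_pos_of_pos hβ).ne']

theorem rlIntegral_pow (hβ : 0 < β) (hay : a < y) (n : ℕ) :
    rlIntegral β a (fun τ => τ ^ n) y = ∑ k ∈ Finset.range (n + 1),
      n.choose k * a ^ (n - k) * k.factorial * ((y - a) ^ (β + k) / Gamma (β + k + 1)) := by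
  have hbinom : (fun τ : ℝ => τ ^ n) =
      fun τ => ∑ k ∈ Finset.range (n + 1), n.choose k * a ^ (n - k) * (τ - a) ^ k := by
    funext τ
    rw [← sub_add_cancel τ a, add_pow, sub_add_cancel]
    exact Finset.sum_congr rfl fun k _ => by ring
  rw [hbinom, rlIntegral_sum_const_mul hβ _ _ fun k _ => by fun_prop]
  simp only [rlIntegral_sub_pow hβ hay, mul_assoc]

end rlIntegral

theorem rl_derivative_monomial_general (α : ℝ) (hαni : ∀ j : ℤ, α ≠ j)
    (m : ℕ) (hm : m = ⌈α⌉₊) (n : ℕ) (a x : ℝ) (hax : a < x) :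
    iteratedDeriv m
      (fun y => (1 / Real.Gamma ((m : ℝ) - α)) *
        ∫ τ in a..y, (y - τ) ^ ((m : ℝ) - α - 1) * τ ^ n) x =
      (n.factorial : ℝ) * (x - a) ^ (-α) *
        ∑ k ∈ Finset.range (n + 1),
          a ^ (n - k) * (x - a) ^ k / ((n - k).factorial * Real.Gamma ((k : ℝ) - α + 1)) := by
  have hm_pos : 0 < (m : ℝ) - α := by
    rw [sub_pos, hm]
    exact (Nat.le_ceil α).lt_of_ne fun h => hαni ⌈α⌉₊ (by exact_mod_cast h)
  have hI : rlIntegral ((m : ℝ) - α) a (fun τ => τ ^ n) =ᶠ[nhds x] fun y =>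
      ∑ k ∈ Finset.range (n + 1), n.choose k * a ^ (n - k) * k.factorial *
        ((y - a) ^ ((m - α) + k) / Gamma ((m - α) + k + 1)) := by
    filter_upwards [Ioi_mem_nhds hax] with y hy using rlIntegral_pow hm_pos hy n
  change iteratedDeriv m (rlIntegral ((m : ℝ) - α) a fun τ => τ ^ n) x = _
  rw [hI.iteratedDeriv_eq,
    iteratedDeriv_sum_rpow_sub_div_Gamma _ _ _ _ (fun k : ℕ => (m - α) + k) hax, Finset.mul_sum]
  refine Finset.sum_congr rfl fun k hk => ?_
  have hchoose : (n.choose k * k.factorial * (n - k).factorial : ℝ) = n.factorial := by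
    exact_mod_cast Nat.choose_mul_factorial_mul_factorial (Finset.mem_range_succ_iff.1 hk)
  rw [show (m : ℝ) - α + k - m = -α + k by ring, rpow_add (sub_pos.2 hax), rpow_natCast,
    show -α + k + 1 = (k : ℝ) - α + 1 by ring, ← hchoose]
  field_simp

theorem rl_derivative_monomial (α : ℝ) (hα : 0 < α) (hαni : ∀ j : ℤ, α ≠ j)
    (m : ℕ) (hm : m = ⌈α⌉₊) (n : ℕ) (a x : ℝ) (hax : a < x) :
    iteratedDeriv m
      (fun y => (1 / Real.Gamma ((m : ℝ) - α)) *
        ∫ τ in a..y, (y - τ) ^ ((m : ℝ) - α - 1) * τ ^ n) x =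
      (n.factorial : ℝ) * (x - a) ^ (-α) *
        ∑ k ∈ Finset.range (n + 1),
          a ^ (n - k) * (x - a) ^ k / ((n - k).factorial * Real.Gamma ((k : ℝ) - α + 1)) :=
  rl_derivative_monomial_general α hαni m hm n a x hax
end

section
/- Let α > 0 and let x > 0. Then the left-sided Riemann–Liouville fractional integral of order α (with base point 0) of the Gaussian function τ ↦ exp(-τ²/2) satisfies (1/Γ(α)) ∫_0^x (x - τ)^(α-1) exp(-τ²/2) dτ = Σ_{n=0}^{∞} ((-1)^n (2n)! / (2^n · n! · Γ(2n + α + 1))) · x^(2n+α), where the series on the right converges absolutely. -/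
/-!
Expand `exp (-τ² / 2) = ∑ (-1/2)ⁿ τ²ⁿ / n!`. On `[0, x]` the terms are bounded by `(x² / 2)ⁿ / n!`,
and `(x - τ)^(α - 1)` is integrable there because `α > 0`, so the series may be integrated
termwise against it. Each term is then a Beta integral
`∫₀ˣ τ²ⁿ (x - τ)^(α - 1) dτ = (2n)! Γ(α) / Γ(2n + α + 1) · x^(2n + α)`.
-/

open MeasureTheory Real

open scoped Nat

theorem integral_rpow_mul_sub_rpow {a b x : ℝ} (ha : 0 < a) (hb : 0 < b) (hx : 0 < x) :
    ∫ τ in (0 : ℝ)..x, τ ^ (a - 1) * (x - τ) ^ (b - 1) =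
      Gamma a * Gamma b / Gamma (a + b) * x ^ (a + b - 1) := by
  apply Complex.ofReal_injective
  have hGamma : Complex.Gamma a * Complex.Gamma b =
      Complex.Gamma (a + b) * Complex.betaIntegral a b :=
    Complex.Gamma_mul_Gamma_eq_betaIntegral (by simpa using ha) (by simpa using hb)
  have hGamma_ne : Complex.Gamma (a + b) ≠ 0 :=
    Complex.Gamma_ne_zero_of_re_pos (by simp only [Complex.add_re, Complex.ofReal_re]; positivity)
  have hintegrand : ∀ τ ∈ Set.uIcc 0 x, ((τ ^ (a - 1) * (x - τ) ^ (b - 1) : ℝ) : ℂ) =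
      (τ : ℂ) ^ ((a : ℂ) - 1) * ((x : ℂ) - τ) ^ ((b : ℂ) - 1) := by
    intro τ hτ
    rw [Set.uIcc_of_le hx.le] at hτ
    push_cast [Complex.ofReal_cpow hτ.1, Complex.ofReal_cpow (sub_nonneg.2 hτ.2)]
    rfl
  rw [← intervalIntegral.integral_ofReal, intervalIntegral.integral_congr hintegrand,
    Complex.betaIntegral_scaled a b hx]
  push_cast [Complex.ofReal_cpow hx.le, ← Complex.Gamma_ofReal]
  rw [hGamma, mul_div_cancel_left₀ _ hGamma_ne, mul_comm]

theorem integral_pow_mul_sub_rpow {b x : ℝ} (hb : 0 < b) (hx : 0 < x) (k : ℕ) :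
    ∫ τ in (0 : ℝ)..x, τ ^ k * (x - τ) ^ (b - 1) =
      k ! * Gamma b / Gamma (k + b + 1) * x ^ (k + b) := by
  have h := integral_rpow_mul_sub_rpow (a := k + 1) (by positivity) hb hx
  simpa only [add_sub_cancel_right, rpow_natCast, Gamma_nat_eq_factorial,
    add_right_comm _ (1 : ℝ) b] using h

theorem intervalIntegrable_sub_rpow {r : ℝ} (hr : -1 < r) (x : ℝ) :
    IntervalIntegrable (fun τ ↦ (x - τ) ^ r) volume 0 x := by
  have h := (intervalIntegral.intervalIntegrable_rpow' (a := 0) (b := x) hr).comp_sub_left x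
  simpa using h.symm

theorem hasSum_integral_mul_tsum {𝕜 α : Type*} [RCLike 𝕜] [MeasurableSpace α] {μ : Measure α}
    {w : α → 𝕜} {u : ℕ → α → 𝕜} {M : ℕ → ℝ} (hw : Integrable w μ)
    (hu : ∀ n, AEStronglyMeasurable (u n) μ) (hbound : ∀ n, ∀ᵐ t ∂μ, ‖u n t‖ ≤ M n)
    (hM : Summable M) :
    HasSum (fun n ↦ ∫ t, w t * u n t ∂μ) (∫ t, w t * ∑' n, u n t ∂μ) := by
  have hint n : Integrable (fun t ↦ w t * u n t) μ := hw.mul_bdd (hu n) (hbound n)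
  have hnorm n : ∫ t, ‖w t * u n t‖ ∂μ ≤ (∫ t, ‖w t‖ ∂μ) * M n := by
    rw [← integral_mul_const]
    refine integral_mono_ae (hint n).norm (hw.norm.mul_const _) ?_
    filter_upwards [hbound n] with t ht
    rw [norm_mul]
    exact mul_le_mul_of_nonneg_left ht (norm_nonneg _)
  have hsum : Summable fun n ↦ ∫ t, ‖w t * u n t‖ ∂μ :=
    .of_nonneg_of_le (fun n ↦ integral_nonneg fun t ↦ norm_nonneg _) hnorm (hM.mul_left _)
  simpa only [tsum_mul_left] using hasSum_integral_of_summable_integral_norm hint hsum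

theorem hasSum_exp_neg_sq_div_two (τ : ℝ) :
    HasSum (fun n : ℕ ↦ (-1 / 2 : ℝ) ^ n / n ! * τ ^ (2 * n)) (exp (-τ ^ 2 / 2)) := by
  have hterm : (fun n : ℕ ↦ (-1 / 2 : ℝ) ^ n / n ! * τ ^ (2 * n)) =
      fun n ↦ (-τ ^ 2 / 2) ^ n / n ! := by
    ext n
    ring
  rw [hterm, exp_eq_exp_ℝ]
  exact NormedSpace.expSeries_div_hasSum_exp _

theorem norm_neg_half_pow_div_factorial_mul_pow_le {τ x : ℝ} (hτ : |τ| ≤ x) (n : ℕ) :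
    ‖(-1 / 2 : ℝ) ^ n / n ! * τ ^ (2 * n)‖ ≤ (x ^ 2 / 2) ^ n / n ! := by
  calc ‖(-1 / 2 : ℝ) ^ n / n ! * τ ^ (2 * n)‖ = (|τ| ^ 2 / 2) ^ n / n ! := by
        rw [norm_mul, norm_div, norm_pow, norm_pow, pow_mul, Real.norm_natCast, Real.norm_eq_abs]
        norm_num
        ring
    _ ≤ (x ^ 2 / 2) ^ n / n ! := by gcongr

theorem rl_integral_gaussian_zero (α : ℝ) (hα : 0 < α) (x : ℝ) (hx : 0 < x) :
    Summable (fun n : ℕ =>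
      ((-1 : ℝ) ^ n * (2 * n).factorial /
        (2 ^ n * n.factorial * Real.Gamma (2 * n + α + 1))) * x ^ (2 * (n : ℝ) + α)) ∧
    (1 / Real.Gamma α) * ∫ τ in (0 : ℝ)..x, (x - τ) ^ (α - 1) * Real.exp (-τ ^ 2 / 2) =
      ∑' n : ℕ,
        ((-1 : ℝ) ^ n * (2 * n).factorial /
          (2 ^ n * n.factorial * Real.Gamma (2 * n + α + 1))) * x ^ (2 * (n : ℝ) + α) := by
  have hw : IntegrableOn (fun τ ↦ (x - τ) ^ (α - 1)) (Set.Ioc 0 x) :=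
    (intervalIntegrable_iff_integrableOn_Ioc_of_le hx.le).1
      (intervalIntegrable_sub_rpow (by linarith) x)
  have hbound (n : ℕ) : ∀ᵐ τ ∂(volume.restrict (Set.Ioc 0 x)),
      ‖(-1 / 2 : ℝ) ^ n / n ! * τ ^ (2 * n)‖ ≤ (x ^ 2 / 2) ^ n / n ! :=
    ae_restrict_of_forall_mem measurableSet_Ioc fun τ hτ ↦
      norm_neg_half_pow_div_factorial_mul_pow_le ((abs_of_pos hτ.1).trans_le hτ.2) n
  have hterm (n : ℕ) :
      ∫ τ in Set.Ioc 0 x, (x - τ) ^ (α - 1) * ((-1 / 2 : ℝ) ^ n / n ! * τ ^ (2 * n)) =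
        Gamma α * (((-1 : ℝ) ^ n * (2 * n).factorial /
          (2 ^ n * n.factorial * Real.Gamma (2 * n + α + 1))) * x ^ (2 * (n : ℝ) + α)) := by
    simp_rw [mul_left_comm ((x - _) ^ (α - 1)), mul_comm ((x - _) ^ (α - 1))]
    rw [integral_const_mul, ← intervalIntegral.integral_of_le hx.le,
      integral_pow_mul_sub_rpow hα hx (2 * n)]
    have hΓ : Gamma (2 * n + α + 1) ≠ 0 := (Gamma_pos_of_pos (by positivity)).ne'
    push_cast
    rw [div_pow]
    field_simp
  have hsum := hasSum_integral_mul_tsum hw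
    (fun n ↦ (by fun_prop : Continuous _).aestronglyMeasurable) hbound
    (summable_pow_div_factorial _)
  simp only [hterm, (hasSum_exp_neg_sq_div_two _).tsum_eq] at hsum
  have h := hsum.mul_left (Gamma α)⁻¹
  simp only [inv_mul_cancel_left₀ (Gamma_pos_of_pos hα).ne'] at h
  rw [intervalIntegral.integral_of_le hx.le, one_div]
  exact ⟨h.summable, h.tsum_eq.symm⟩
end

section
/- Let α > 0 be a non-integer real number, let m = ⌈α⌉, let n ∈ ℕ with 2n ≥ m, and let x > 0. Then the left-sided Caputo fractional derivative of order α (with base point 0) of the thin-plate spline τ ↦ τ^(2n) ln τ satisfies (1/Γ(m-α)) ∫_0^x (x - τ)^(m-α-1) g_m(τ) dτ = (Γ(2n+1)/Γ(2n+1-α)) · x^(2n-α) · ( ln(x) + Ψ(2n-m+1) - Ψ(2n+1-α) + m! · Γ(2n-m+1) · Σ_{r=1}^{m} (-1)^(r-1) / (r · (m-r)! · Γ(2n-m+r+1)) ), where g_m(τ) = (Γ(2n+1)/Γ(2n-m+1)) τ^(2n-m) ln(τ) + m! · Γ(2n+1) · τ^(2n-m) · Σ_{r=1}^{m} (-1)^(r-1)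 / (r · (m-r)! · Γ(2n-m+r+1)) is the m-th derivative of τ ↦ τ^(2n) ln τ on (0, ∞), and Ψ(t) = Γ'(t)/Γ(t) is the digamma function. -/
/-!
With `β = m - α` and `k = 2n - m`, the integrand is `(x - τ)^(β-1) τ^k (A log τ + C)`.
The substitution `τ = x u` reduces the integral to the Beta integral
`B(k+1, β) = ∫₀¹ u^k (1-u)^(β-1) du = Γ(k+1) Γ(β) / Γ(k+1+β)`
and to its derivative in the first argument,
`∫₀¹ u^k log u (1-u)^(β-1) du = B(k+1, β) (ψ(k+1) - ψ(k+1+β))`.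
For the latter, view `s ↦ B(s, β)` as the Mellin transform of `t ↦ (1-t)^(β-1)` restricted to
`(0, 1)`: the derivative of a Mellin transform is the Mellin transform of the function multiplied
by `log t`, while differentiating `Γ(s) Γ(β) / Γ(s+β)` produces the digamma terms.
-/

open MeasureTheory Real

open Set Filter Topology Asymptotics

section MellinOfReal

lemma cpow_sub_one_smul_ofReal {t : ℝ} (ht : 0 ≤ t) (s r : ℝ) :
    (t : ℂ) ^ ((s : ℂ) - 1) • (r : ℂ) = ((t ^ (s - 1) * r : ℝ) : ℂ) := by
  rw [smul_eq_mul, ← Complex.ofReal_one, ← Complex.ofReal_sub, ← Complex.ofReal_cpow ht,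
    Complex.ofReal_mul]

lemma rpow_sub_one_mul_indicator_Ioo (g : ℝ → ℝ) (s t : ℝ) :
    t ^ (s - 1) * (Ioo 0 1).indicator g t = (Ioo 0 1).indicator (fun u => u ^ (s - 1) * g u) t :=
  (indicator_mul_right (Ioo 0 1) (fun u => u ^ (s - 1)) g).symm

lemma setIntegral_Ioi_rpow_mul_indicator_Ioo (g : ℝ → ℝ) (s : ℝ) :
    ∫ t in Ioi 0, t ^ (s - 1) * (Ioo 0 1).indicator g t =
      ∫ t in (0 : ℝ)..1, t ^ (s - 1) * g t := by
  simp_rw [rpow_sub_one_mul_indicator_Ioo]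
  rw [setIntegral_indicator measurableSet_Ioo, inter_eq_right.mpr Ioo_subset_Ioi_self,
    intervalIntegral.integral_of_le zero_le_one, integral_Ioc_eq_integral_Ioo]

lemma mellin_ofReal_indicator_Ioo (g : ℝ → ℝ) (s : ℝ) :
    mellin (fun t => (((Ioo 0 1).indicator g t : ℝ) : ℂ)) s =
      ↑(∫ t in (0 : ℝ)..1, t ^ (s - 1) * g t) := by
  rw [mellin, ← setIntegral_Ioi_rpow_mul_indicator_Ioo]
  refine (setIntegral_congr_fun measurableSet_Ioi fun t ht => ?_).trans integral_ofReal
  exact cpow_sub_one_smul_ofReal (le_of_lt ht) _ _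

lemma MellinConvergent.intervalIntegrable_of_indicator_Ioo {g : ℝ → ℝ} {s : ℝ}
    (h : MellinConvergent (fun t => (((Ioo 0 1).indicator g t : ℝ) : ℂ)) s) :
    IntervalIntegrable (fun t => t ^ (s - 1) * g t) volume 0 1 := by
  have hre : IntegrableOn (fun t => t ^ (s - 1) * (Ioo 0 1).indicator g t) (Ioi 0) := by
    refine IntegrableOn.congr_fun h.re (fun t ht => ?_) measurableSet_Ioi
    simp only [cpow_sub_one_smul_ofReal (le_of_lt ht)]
    exact Complex.ofReal_re _
  simp_rw [rpow_sub_one_mul_indicator_Ioo] at hre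
  rw [intervalIntegrable_iff_integrableOn_Ioo_of_le zero_le_one]
  simpa [IntegrableOn, Measure.restrict_restrict measurableSet_Ioo,
    inter_eq_left.mpr Ioo_subset_Ioi_self] using
    (integrable_indicator_iff measurableSet_Ioo).mp hre

end MellinOfReal

noncomputable def betaKernel (β : ℝ) : ℝ → ℝ :=
  (Ioo 0 1).indicator fun u => (1 - u) ^ (β - 1)

section BetaKernel

variable {s β : ℝ}

lemma integrable_betaKernel (hβ : 0 < β) : Integrable (betaKernel β) := by
  have h : IntervalIntegrable (fun u : ℝ => (1 - u) ^ (β - 1)) volume 0 1 := by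
    simpa using ((intervalIntegral.intervalIntegrable_rpow' (a := 0) (b := 1) (r := β - 1)
      (by linarith)).comp_sub_left 1).symm
  rw [intervalIntegrable_iff_integrableOn_Ioo_of_le zero_le_one] at h
  exact h.integrable_indicator measurableSet_Ioo

lemma locallyIntegrableOn_ofReal_betaKernel (hβ : 0 < β) :
    LocallyIntegrableOn (fun t => (betaKernel β t : ℂ)) (Ioi 0) :=
  ((integrable_betaKernel hβ).ofReal (𝕜 := ℂ)).locallyIntegrable.locallyIntegrableOn _

lemma isBigO_betaKernel_atTop (β a : ℝ) :
    (fun t => (betaKernel β t : ℂ)) =O[atTop] (· ^ (-a)) := by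
  refine EventuallyEq.trans_isBigO ?_ (isBigO_zero (fun t : ℝ => t ^ (-a)) atTop)
  filter_upwards [eventually_ge_atTop 1] with t ht
  simp [betaKernel, indicator_of_notMem (fun h : t ∈ Ioo 0 1 => (not_lt.mpr ht) h.2)]

lemma isBigO_betaKernel_nhdsGT_zero (β : ℝ) :
    (fun t => (betaKernel β t : ℂ)) =O[𝓝[>] 0] (· ^ (-(0 : ℝ))) := by
  have hcont : Tendsto (fun u : ℝ => (((1 - u) ^ (β - 1) : ℝ) : ℂ)) (𝓝[>] 0)
      (𝓝 (((1 - 0) ^ (β - 1) : ℝ) : ℂ)) := by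
    have h : ContinuousAt (fun u : ℝ => (1 - u) ^ (β - 1)) 0 :=
      (continuous_const.sub continuous_id).continuousAt.rpow_const (Or.inl (by norm_num))
    exact (Complex.continuous_ofReal.continuousAt.comp h).tendsto.mono_left nhdsWithin_le_nhds
  have hev : (fun t => (betaKernel β t : ℂ)) =ᶠ[𝓝[>] 0]
      fun u => (((1 - u) ^ (β - 1) : ℝ) : ℂ) := by
    filter_upwards [Ioo_mem_nhdsGT (zero_lt_one' ℝ)] with t ht
    simp [betaKernel, indicator_of_mem ht]
  simpa using hev.trans_isBigO (hcont.isBigO_one ℝ)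

lemma mellinConvergent_betaKernel (hβ : 0 < β) (hs : 0 < s) :
    MellinConvergent (fun t => (betaKernel β t : ℂ)) s :=
  mellinConvergent_of_isBigO_rpow (locallyIntegrableOn_ofReal_betaKernel hβ)
    (isBigO_betaKernel_atTop β (s + 1)) (by simp) (isBigO_betaKernel_nhdsGT_zero β) (by simpa)

lemma hasDerivAt_mellin_betaKernel (hβ : 0 < β) (hs : 0 < s) :
    MellinConvergent (fun t => Real.log t • (betaKernel β t : ℂ)) s ∧
      HasDerivAt (mellin fun t => (betaKernel β t : ℂ))
        (mellin (fun t => Real.log t • (betaKernel β t : ℂ)) s) s :=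
  mellin_hasDerivAt_of_isBigO_rpow (locallyIntegrableOn_ofReal_betaKernel hβ)
    (isBigO_betaKernel_atTop β (s + 1)) (by simp) (isBigO_betaKernel_nhdsGT_zero β) (by simpa)

lemma log_smul_ofReal_betaKernel (β t : ℝ) :
    Real.log t • (betaKernel β t : ℂ) =
      (((Ioo 0 1).indicator (fun u => Real.log u * (1 - u) ^ (β - 1)) t : ℝ) : ℂ) := by
  rw [betaKernel, indicator_mul_right, Complex.real_smul, Complex.ofReal_mul]

end BetaKernel

section BetaIntegral

variable {s β : ℝ}

lemma intervalIntegrable_rpow_mul_one_sub_rpow (hs : 0 < s) (hβ : 0 < β) :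
    IntervalIntegrable (fun u => u ^ (s - 1) * (1 - u) ^ (β - 1)) volume 0 1 :=
  (mellinConvergent_betaKernel hβ hs).intervalIntegrable_of_indicator_Ioo

lemma intervalIntegrable_rpow_mul_log_mul_one_sub_rpow (hs : 0 < s) (hβ : 0 < β) :
    IntervalIntegrable (fun u => u ^ (s - 1) * (Real.log u * (1 - u) ^ (β - 1))) volume 0 1 := by
  have h := (hasDerivAt_mellin_betaKernel hβ hs).1
  simp_rw [log_smul_ofReal_betaKernel] at h
  exact h.intervalIntegrable_of_indicator_Ioo

lemma integral_rpow_mul_one_sub_rpow (hs : 0 < s) (hβ : 0 < β) :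
    ∫ u in (0 : ℝ)..1, u ^ (s - 1) * (1 - u) ^ (β - 1) =
      Gamma s * Gamma β / Gamma (s + β) := by
  have hB : Complex.betaIntegral s β =
      ↑(∫ u in (0 : ℝ)..1, u ^ (s - 1) * (1 - u) ^ (β - 1)) := by
    refine (intervalIntegral.integral_congr fun u hu => ?_).trans intervalIntegral.integral_ofReal
    rw [uIcc_of_le zero_le_one] at hu
    simp only [Complex.ofReal_mul, Complex.ofReal_cpow hu.1,
      Complex.ofReal_cpow (sub_nonneg.2 hu.2), Complex.ofReal_sub, Complex.ofReal_one]
  have hΓ := Complex.Gamma_mul_Gamma_eq_betaIntegral (s := s) (t := β) (by simpa) (by simpa)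
  rw [hB, ← Complex.ofReal_add, Complex.Gamma_ofReal, Complex.Gamma_ofReal, Complex.Gamma_ofReal,
    ← Complex.ofReal_mul, ← Complex.ofReal_mul, Complex.ofReal_inj] at hΓ
  rw [hΓ, mul_div_cancel_left₀ _ (Gamma_pos_of_pos (add_pos hs hβ)).ne']

lemma hasDerivAt_Gamma_of_pos {r : ℝ} (hr : 0 < r) : HasDerivAt Gamma (deriv Gamma r) r :=
  (differentiableAt_Gamma fun m =>
    ((neg_nonpos.2 (Nat.cast_nonneg m)).trans_lt hr).ne').hasDerivAt

lemma hasDerivAt_Gamma_mul_Gamma_div_Gamma_add (hs : 0 < s) (hβ : 0 < β) :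
    HasDerivAt (fun r => Gamma r * Gamma β / Gamma (r + β))
      (Gamma s * Gamma β / Gamma (s + β) * (logDeriv Gamma s - logDeriv Gamma (s + β))) s := by
  have hsβ := add_pos hs hβ
  refine (((hasDerivAt_Gamma_of_pos hs).mul_const (Gamma β)).div
    (hasDerivAt_Gamma_of_pos hsβ).comp_add_const (Gamma_pos_of_pos hsβ).ne').congr_deriv ?_
  have hΓs := (Gamma_pos_of_pos hs).ne'
  have hΓsβ := (Gamma_pos_of_pos hsβ).ne'
  rw [logDeriv_apply, logDeriv_apply]
  field_simp

lemma integral_rpow_mul_log_mul_one_sub_rpow (hs : 0 < s) (hβ : 0 < β) :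
    ∫ u in (0 : ℝ)..1, u ^ (s - 1) * (Real.log u * (1 - u) ^ (β - 1)) =
      Gamma s * Gamma β / Gamma (s + β) * (logDeriv Gamma s - logDeriv Gamma (s + β)) := by
  have hmellin : (fun r : ℝ => mellin (fun t => (betaKernel β t : ℂ)) r) =ᶠ[𝓝 s]
      fun r => ((Gamma r * Gamma β / Gamma (r + β) : ℝ) : ℂ) := by
    filter_upwards [lt_mem_nhds hs] with r hr
    exact (mellin_ofReal_indicator_Ioo _ r).trans (by rw [integral_rpow_mul_one_sub_rpow hr hβ])
  have hderiv := (hasDerivAt_mellin_betaKernel hβ hs).2.comp_ofReal.unique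
    ((hasDerivAt_Gamma_mul_Gamma_div_Gamma_add hs hβ).ofReal_comp.congr_of_eventuallyEq hmellin)
  simp_rw [log_smul_ofReal_betaKernel] at hderiv
  rwa [mellin_ofReal_indicator_Ioo, Complex.ofReal_inj] at hderiv

end BetaIntegral

section RiemannLiouville

variable {s β x : ℝ}

lemma integral_sub_rpow_mul_eq_rpow_mul_integral (f : ℝ → ℝ) (β : ℝ) (hx : 0 < x) :
    ∫ τ in (0 : ℝ)..x, (x - τ) ^ (β - 1) * f τ =
      x ^ β * ∫ u in (0 : ℝ)..1, (1 - u) ^ (β - 1) * f (x * u) := by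
  have hscale := intervalIntegral.integral_comp_mul_left
    (fun τ => (x - τ) ^ (β - 1) * f τ) hx.ne' (a := 0) (b := 1)
  have hfactor : ∫ u in (0 : ℝ)..1, (x - x * u) ^ (β - 1) * f (x * u) =
      x ^ (β - 1) * ∫ u in (0 : ℝ)..1, (1 - u) ^ (β - 1) * f (x * u) := by
    rw [← intervalIntegral.integral_const_mul]
    refine intervalIntegral.integral_congr fun u hu => ?_
    rw [uIcc_of_le zero_le_one] at hu
    rw [← mul_one_sub, mul_rpow hx.le (sub_nonneg.2 hu.2), mul_assoc]
  rw [mul_zero, mul_one, smul_eq_mul, hfactor, eq_inv_mul_iff_mul_eq₀ hx.ne'] at hscale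
  rw [← hscale, ← mul_assoc, mul_comm x, ← rpow_add_one hx.ne', sub_add_cancel]

lemma integral_sub_rpow_mul_rpow_mul_log_add (hs : 0 < s) (hβ : 0 < β) (hx : 0 < x)
    (a b : ℝ) :
    ∫ τ in (0 : ℝ)..x, (x - τ) ^ (β - 1) * (τ ^ (s - 1) * (a * Real.log τ + b)) =
      Gamma s * Gamma β / Gamma (s + β) * x ^ (s + β - 1) *
        (a * (Real.log x + logDeriv Gamma s - logDeriv Gamma (s + β)) + b) := by
  have hsplit : ∫ u in (0 : ℝ)..1,
        (1 - u) ^ (β - 1) * ((x * u) ^ (s - 1) * (a * Real.log (x * u) + b)) =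
      ∫ u in (0 : ℝ)..1,
        x ^ (s - 1) * (a * Real.log x + b) * (u ^ (s - 1) * (1 - u) ^ (β - 1)) +
          x ^ (s - 1) * a * (u ^ (s - 1) * (Real.log u * (1 - u) ^ (β - 1))) := by
    refine intervalIntegral.integral_congr_ae (ae_of_all _ fun u hu => ?_)
    rw [uIoc_of_le zero_le_one] at hu
    rw [mul_rpow hx.le hu.1.le, Real.log_mul hx.ne' hu.1.ne']
    ring
  rw [integral_sub_rpow_mul_eq_rpow_mul_integral _ _ hx, hsplit,
    intervalIntegral.integral_add ((intervalIntegrable_rpow_mul_one_sub_rpow hs hβ).const_mul _)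
      ((intervalIntegrable_rpow_mul_log_mul_one_sub_rpow hs hβ).const_mul _),
    intervalIntegral.integral_const_mul, intervalIntegral.integral_const_mul,
    integral_rpow_mul_one_sub_rpow hs hβ, integral_rpow_mul_log_mul_one_sub_rpow hs hβ,
    show s + β - 1 = β + (s - 1) by ring, rpow_add hx]
  ring

end RiemannLiouville

theorem caputo_derivative_thin_plate_zero_general (α : ℝ) (hαni : ∀ j : ℤ, α ≠ j)
    (m : ℕ) (hm : m = ⌈α⌉₊) (n : ℕ) (hmn : m ≤ 2 * n) (x : ℝ) (hx : 0 < x) :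
    (1 / Real.Gamma ((m : ℝ) - α)) *
      ∫ τ in (0 : ℝ)..x, (x - τ) ^ ((m : ℝ) - α - 1) *
        ((Real.Gamma (2 * n + 1) / Real.Gamma (2 * n - (m : ℝ) + 1)) *
            τ ^ (2 * n - m) * Real.log τ +
          (m.factorial : ℝ) * Real.Gamma (2 * n + 1) * τ ^ (2 * n - m) *
            ∑ r ∈ Finset.Icc 1 m,
              (-1 : ℝ) ^ (r - 1) /
                (r * (m - r).factorial * Real.Gamma (2 * n - (m : ℝ) + r + 1))) =
      (Real.Gamma (2 * n + 1) / Real.Gamma (2 * n + 1 - α)) * x ^ (2 * (n : ℝ) - α) *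
        (Real.log x +
          deriv Real.Gamma (2 * n - (m : ℝ) + 1) / Real.Gamma (2 * n - (m : ℝ) + 1) -
          deriv Real.Gamma (2 * n + 1 - α) / Real.Gamma (2 * n + 1 - α) +
          (m.factorial : ℝ) * Real.Gamma (2 * n - (m : ℝ) + 1) *
            ∑ r ∈ Finset.Icc 1 m,
              (-1 : ℝ) ^ (r - 1) /
                (r * (m - r).factorial * Real.Gamma (2 * n - (m : ℝ) + r + 1))) := by
  set S := ∑ r ∈ Finset.Icc 1 m,
    (-1 : ℝ) ^ (r - 1) / (r * (m - r).factorial * Real.Gamma (2 * n - (m : ℝ) + r + 1))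
  set A := Real.Gamma (2 * n + 1) / Real.Gamma (2 * n - (m : ℝ) + 1)
  have hβ : 0 < (m : ℝ) - α :=
    sub_pos.2 ((hm ▸ Nat.le_ceil α).lt_of_ne (by exact_mod_cast hαni m))
  have hk : ((2 * n - m : ℕ) : ℝ) = 2 * n - m := by push_cast [Nat.cast_sub hmn]; ring
  have hs : 0 < 2 * (n : ℝ) - m + 1 := by rw [← hk]; positivity
  have hintegrand (τ : ℝ) :
      A * τ ^ (2 * n - m) * Real.log τ +
          (m.factorial : ℝ) * Real.Gamma (2 * n + 1) * τ ^ (2 * n - m) * S =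
        τ ^ ((2 * (n : ℝ) - m + 1) - 1) *
          (A * Real.log τ + m.factorial * Real.Gamma (2 * n + 1) * S) := by
    rw [add_sub_cancel_right, ← hk, rpow_natCast]
    ring
  simp_rw [hintegrand]
  rw [integral_sub_rpow_mul_rpow_mul_log_add hs hβ hx, logDeriv_apply, logDeriv_apply,
    show 2 * (n : ℝ) - m + 1 + (m - α) = 2 * n + 1 - α by ring,
    show 2 * (n : ℝ) + 1 - α - 1 = 2 * n - α by ring]
  have hΓs := (Gamma_pos_of_pos hs).ne'
  have hΓβ := (Gamma_pos_of_pos hβ).ne'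
  simp only [A]
  field_simp

theorem caputo_derivative_thin_plate_zero (α : ℝ) (hα : 0 < α) (hαni : ∀ j : ℤ, α ≠ j)
    (m : ℕ) (hm : m = ⌈α⌉₊) (n : ℕ) (hmn : m ≤ 2 * n) (x : ℝ) (hx : 0 < x) :
    (1 / Real.Gamma ((m : ℝ) - α)) *
      ∫ τ in (0 : ℝ)..x, (x - τ) ^ ((m : ℝ) - α - 1) *
        ((Real.Gamma (2 * n + 1) / Real.Gamma (2 * n - (m : ℝ) + 1)) *
            τ ^ (2 * n - m) * Real.log τ +
          (m.factorial : ℝ) * Real.Gamma (2 * n + 1) * τ ^ (2 * n - m) *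
            ∑ r ∈ Finset.Icc 1 m,
              (-1 : ℝ) ^ (r - 1) /
                (r * (m - r).factorial * Real.Gamma (2 * n - (m : ℝ) + r + 1))) =
      (Real.Gamma (2 * n + 1) / Real.Gamma (2 * n + 1 - α)) * x ^ (2 * (n : ℝ) - α) *
        (Real.log x +
          deriv Real.Gamma (2 * n - (m : ℝ) + 1) / Real.Gamma (2 * n - (m : ℝ) + 1) -
          deriv Real.Gamma (2 * n + 1 - α) / Real.Gamma (2 * n + 1 - α) +
          (m.factorial : ℝ) * Real.Gamma (2 * n - (m : ℝ) + 1) *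
            ∑ r ∈ Finset.Icc 1 m,
              (-1 : ℝ) ^ (r - 1) /
                (r * (m - r).factorial * Real.Gamma (2 * n - (m : ℝ) + r + 1))) :=
  caputo_derivative_thin_plate_zero_general α hαni m hm n hmn x hx
end
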